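/- arXiv:1412.8693 — 4 statements merged into one kernel-verified Lean document; each statement's English description precedes it below -/
import Mathlib

section
/- For any convex body K in R^n, the Minkowski asymmetry of K equals the Banach–Mazur distance from K to its difference body K−K, and this is the minimum Banach–Mazur distance from K to any centrally symmetric convex body. -/
open Set Pointwise

/-- `V n` is `ℝ^n` (as a Euclidean space, also used as carrier for general
Minkowski spaces whose unit ball `B` is given as a set). -/
abbrev V (n : ℕ) := EuclideanSpace ℝ (Fin n)

/-- A convex body: compact, convex, with nonempty interior. -/
def IsConvexBody {n : ℕ} (K : Set (V n)) : Prop :=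
  Convex ℝ K ∧ IsCompact K ∧ (interior K).Nonempty

/-- A (centrally) symmetric unit ball of a norm. -/
def IsSymUnitBall {n : ℕ} (B : Set (V n)) : Prop :=
  IsConvexBody B ∧ B = -B

/-- Circumradius of `K` with respect to the unit ball `B`. -/
noncomputable def circum {n : ℕ} (B K : Set (V n)) : ℝ :=
  sInf {ρ : ℝ | 0 < ρ ∧ ∃ c : V n, K ⊆ c +ᵥ ρ • B}

/-- Inradius of `K` with respect to the unit ball `B`. -/
noncomputable def inrad {n : ℕ} (B K : Set (V n)) : ℝ :=
  sSup {ρ : ℝ | 0 < ρ ∧ ∃ c : V n, c +ᵥ ρ • B ⊆ K}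

/-- Diameter of `K` in the norm with unit ball `B` (via the Minkowski gauge). -/
noncomputable def mdiam {n : ℕ} (B K : Set (V n)) : ℝ :=
  sSup {d : ℝ | ∃ x ∈ K, ∃ y ∈ K, d = gauge B (x - y)}

/-- Minkowski asymmetry of `K`. -/
noncomputable def asym {n : ℕ} (K : Set (V n)) : ℝ :=
  sInf {ρ : ℝ | 0 < ρ ∧ ∃ c : V n, -K ⊆ c +ᵥ ρ • K}

/-- `K` is complete (diametrically maximal) w.r.t. the unit ball `B`. -/
def IsCompleteBody {n : ℕ} (B K : Set (V n)) : Prop :=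
  IsConvexBody K ∧ ∀ x : V n, x ∉ K → mdiam B K < mdiam B (K ∪ {x})

/-- `Kstar` is a completion of `K` w.r.t. the unit ball `B`. -/
def IsCompletionOf {n : ℕ} (B Kstar K : Set (V n)) : Prop :=
  IsCompleteBody B Kstar ∧ K ⊆ Kstar ∧ mdiam B Kstar = mdiam B K

/-- Jung ratio `R(K)/D(K)`. -/
noncomputable def jungRatio {n : ℕ} (B K : Set (V n)) : ℝ :=
  circum B K / mdiam B K

/-- Jung constant of the Minkowski space with unit ball `B`. -/
noncomputable def jungConst {n : ℕ} (B : Set (V n)) : ℝ :=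
  sSup {j : ℝ | ∃ K : Set (V n), IsConvexBody K ∧ j = jungRatio B K}

/-- Maximal Minkowski asymmetry over complete bodies. -/
noncomputable def asymConst {n : ℕ} (B : Set (V n)) : ℝ :=
  sSup {s : ℝ | ∃ K : Set (V n), IsCompleteBody B K ∧ s = asym K}

/-- Banach–Mazur distance between `K` and `C`. -/
noncomputable def dBM {n : ℕ} (K C : Set (V n)) : ℝ :=
  sInf {ρ : ℝ | 0 < ρ ∧ ∃ (A : (V n) ≃ᵃ[ℝ] (V n)) (x : V n),
    K ⊆ A '' C ∧ A '' C ⊆ x +ᵥ ρ • K}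

/-- `S` is a `k`-dimensional simplex. -/
def IsSimplexDim {n : ℕ} (k : ℕ) (S : Set (V n)) : Prop :=
  ∃ v : Fin (k + 1) → V n, AffineIndependent ℝ v ∧ S = convexHull ℝ (Set.range v)

/-- Helly property with parameter `k` for translates of `B`. -/
def HellyProp {n : ℕ} (B : Set (V n)) (k : ℕ) : Prop :=
  ∀ X : Set (V n), X.Nonempty →
    (∀ J : Finset (V n), ↑J ⊆ X → J.card ≤ k + 1 →
      (⋂ x ∈ (J : Set (V n)), (x +ᵥ B)).Nonempty) →
    (⋂ x ∈ X, (x +ᵥ B)).Nonempty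

/-- Helly dimension of `B`: the least positive `k` with the Helly property. -/
noncomputable def hellyDim {n : ℕ} (B : Set (V n)) : ℕ :=
  sInf {k : ℕ | 0 < k ∧ HellyProp B k}

/-- `K` is of constant width w.r.t. the unit ball `B`: `K - K` is a dilate of `B`. -/
def IsConstWidth {n : ℕ} (B K : Set (V n)) : Prop :=
  ∃ γ : ℝ, 0 < γ ∧ K - K = γ • B

/-- A regular `n`-simplex in Euclidean space. -/
def IsRegularSimplex {n : ℕ} (T : Set (V n)) : Prop :=
  ∃ v : Fin (n + 1) → V n, AffineIndependent ℝ v ∧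
    (∀ i j k l, i ≠ j → k ≠ l → dist (v i) (v j) = dist (v k) (v l)) ∧
    T = convexHull ℝ (Set.range v)

/-- The Euclidean unit ball in `ℝ^n`. -/
noncomputable def euclBall (n : ℕ) : Set (V n) := Metric.closedBall 0 1

/-- Pseudo completion of `K` with respect to the circumcenter `c`. -/
noncomputable def pseudoCompletion {n : ℕ} (B K : Set (V n)) (c : V n) : Set (V n) :=
  convexHull ℝ (K ∪ (c +ᵥ (mdiam B K - circum B K) • B))

/-!
If `K ⊆ A(B) ⊆ x + ρK` for an affine image of a symmetric body `B`, then `A(B)` is symmetric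
about `A 0`, so reflecting the sandwich in `A 0` gives `-K ⊆ c + ρK`; hence `s(K) ≤ d_BM(K, B)`.
Conversely, if `-K ⊆ c + ρK`, convexity (`K + ρK = (1 + ρ)K`) gives both
`K - K ⊆ c + (1 + ρ)K` and `(1 + ρ)K ⊆ -c + ρ(K - K)`; rescaling by `(1 + ρ)⁻¹` turns these into
a Banach–Mazur sandwich of ratio `ρ` between `K` and `K - K`. So the sets whose infima define
`s(K)` and `d_BM(K, K - K)` coincide.
-/

open Bornology

theorem singleton_add_eq_vadd {G : Type*} [Add G] (a : G) (t : Set G) : {a} + t = a +ᵥ t :=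
  singleton_vadd

section Module

variable {E : Type*} [AddCommGroup E] [Module ℝ E] {K : Set E} {c : E} {ρ : ℝ}

theorem smul_vadd_set (a : ℝ) (c : E) (S : Set E) : a • (c +ᵥ S) = a • c +ᵥ a • S := by
  rw [← singleton_add_eq_vadd, ← singleton_add_eq_vadd, smul_add, smul_set_singleton]

theorem exists_affineEquiv_image_eq_vadd_smul (c : E) {t : ℝ} (ht : t ≠ 0) (S : Set E) :
    ∃ A : E ≃ᵃ[ℝ] E, A '' S = c +ᵥ t • S :=
  ⟨(LinearEquiv.smulOfNeZero ℝ E t ht).toAffineEquiv.trans (AffineEquiv.constVAdd ℝ E c), by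
    rw [AffineEquiv.coe_trans, image_comp]; rfl⟩

theorem AffineMap.neg_image_eq_vadd_image {k V₁ V₂ : Type*} [Ring k] [AddCommGroup V₁]
    [AddCommGroup V₂] [Module k V₁] [Module k V₂] (A : V₁ →ᵃ[k] V₂) {B : Set V₁} (hB : B = -B) :
    -(A '' B) = -(2 • A 0) +ᵥ A '' B := by
  have reflect (b : V₁) : A (-b) = 2 • A 0 - A b := by
    rw [A.decomp]
    simp only [Pi.add_apply, map_neg, map_zero]
    abel
  ext y
  simp only [mem_neg, mem_vadd_set, mem_image, vadd_eq_add]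
  constructor
  · rintro ⟨b, hb, hby⟩
    refine ⟨A (-b), ⟨-b, hB ▸ neg_mem_neg.mpr hb, rfl⟩, ?_⟩
    rw [reflect, hby]
    abel
  · rintro ⟨_, ⟨b, hb, rfl⟩, rfl⟩
    refine ⟨-b, hB ▸ neg_mem_neg.mpr hb, ?_⟩
    rw [reflect]
    abel

theorem exists_neg_subset_vadd_smul_of_subset_image {B : Set E} (hB : B = -B) (A : E →ᵃ[ℝ] E)
    {x : E} (hKA : K ⊆ A '' B) (hAK : A '' B ⊆ x +ᵥ ρ • K) : ∃ c : E, -K ⊆ c +ᵥ ρ • K :=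
  ⟨-(2 • A 0) + x, calc
    -K ⊆ -(A '' B) := neg_subset_neg.mpr hKA
    _ = -(2 • A 0) +ᵥ A '' B := A.neg_image_eq_vadd_image hB
    _ ⊆ -(2 • A 0) +ᵥ (x +ᵥ ρ • K) := vadd_set_mono hAK
    _ = (-(2 • A 0) + x) +ᵥ ρ • K := vadd_vadd _ _ _⟩

namespace Convex

variable (hK : Convex ℝ K) (hρ : 0 ≤ ρ) (h : -K ⊆ c +ᵥ ρ • K)
include hK hρ h

theorem sub_subset_vadd_smul : K - K ⊆ c +ᵥ (1 + ρ) • K := by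
  rw [← singleton_add_eq_vadd] at h ⊢
  calc K - K = K + -K := sub_eq_add_neg _ _
    _ ⊆ K + ({c} + ρ • K) := add_subset_add_left h
    _ = {c} + ((1 : ℝ) • K + ρ • K) := by rw [one_smul]; abel
    _ = {c} + (1 + ρ) • K := by rw [hK.add_smul zero_le_one hρ]

theorem smul_subset_vadd_smul_sub : (1 + ρ) • K ⊆ -c +ᵥ ρ • (K - K) := by
  have hK' : K ⊆ {-c} + ρ • -K := by
    have := neg_subset_neg.mpr h
    rwa [neg_neg, ← singleton_add_eq_vadd, neg_add, neg_singleton, ← smul_set_neg] at this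
  rw [← singleton_add_eq_vadd]
  calc (1 + ρ) • K = (1 : ℝ) • K + ρ • K := hK.add_smul zero_le_one hρ
    _ = K + ρ • K := by rw [one_smul]
    _ ⊆ {-c} + ρ • -K + ρ • K := add_subset_add_right hK'
    _ = {-c} + ρ • (K - K) := by rw [sub_eq_add_neg, smul_add, add_comm (ρ • K)]; abel

end Convex

theorem Convex.exists_affineEquiv_sub_sandwich (hK : Convex ℝ K) (hρ : 0 < ρ)
    (h : -K ⊆ c +ᵥ ρ • K) :
    ∃ (A : E ≃ᵃ[ℝ] E) (x : E), K ⊆ A '' (K - K) ∧ A '' (K - K) ⊆ x +ᵥ ρ • K := by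
  set t := (1 + ρ)⁻¹
  have ht : t ≠ 0 := inv_ne_zero (by positivity)
  obtain ⟨A, hA⟩ := exists_affineEquiv_image_eq_vadd_smul (-(t • c)) (mul_ne_zero ht hρ.ne') (K - K)
  refine ⟨A, -(t • c) + (t * ρ) • c, ?_, ?_⟩
  · have := smul_set_mono (a := t) (hK.smul_subset_vadd_smul_sub hρ.le h)
    rwa [smul_smul, inv_mul_cancel₀ (by positivity), one_smul, smul_vadd_set, smul_neg,
      smul_smul, ← hA] at this
  · rw [hA, ← vadd_vadd]
    refine vadd_set_mono ?_
    calc (t * ρ) • (K - K) ⊆ (t * ρ) • (c +ᵥ (1 + ρ) • K) :=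
          smul_set_mono (hK.sub_subset_vadd_smul hρ.le h)
      _ = (t * ρ) • c +ᵥ ρ • K := by
          rw [smul_vadd_set, smul_smul, mul_right_comm, inv_mul_cancel₀ (by positivity), one_mul]

end Module

section Normed

variable {E : Type*} [NormedAddCommGroup E] [NormedSpace ℝ E]

theorem Bornology.IsBounded.exists_subset_vadd_smul {S K : Set E} (hS : IsBounded S)
    (hK : (interior K).Nonempty) : ∃ ρ : ℝ, 0 < ρ ∧ ∃ x : E, S ⊆ x +ᵥ ρ • K := by
  obtain ⟨p, hp⟩ := hK
  have hU : -p +ᵥ K ∈ nhds (0 : E) := by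
    rw [← neg_add_cancel p]
    exact (vadd_mem_nhds_vadd_iff (-p)).mpr (mem_interior_iff_mem_nhds.mp hp)
  obtain ⟨ρ, hρ, hSU⟩ := ((NormedSpace.isVonNBounded_iff ℝ).mpr hS hU).exists_pos
  refine ⟨ρ, hρ, -(ρ • p), ?_⟩
  simpa only [smul_vadd_set, smul_neg] using hSU ρ (Real.le_norm_self ρ)

theorem exists_affineEquiv_sandwich {K B : Set E} (hK : IsBounded K) (hKi : (interior K).Nonempty)
    (hB : IsBounded B) (hBi : (interior B).Nonempty) :
    ∃ ρ : ℝ, 0 < ρ ∧ ∃ (A : E ≃ᵃ[ℝ] E) (x : E), K ⊆ A '' B ∧ A '' B ⊆ x +ᵥ ρ • K := by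
  obtain ⟨t, ht, c, hKB⟩ := hK.exists_subset_vadd_smul hBi
  obtain ⟨A, hA⟩ := exists_affineEquiv_image_eq_vadd_smul c ht.ne' B
  obtain ⟨ρ, hρ, x, hBK⟩ := ((hB.smul₀ t).vadd c).exists_subset_vadd_smul hKi
  exact ⟨ρ, hρ, A, x, hA ▸ hKB, hA ▸ hBK⟩

end Normed

section ConvexBody

variable {n : ℕ} {K : Set (V n)}

theorem asym_eq_dBM_sub_self (hK : Convex ℝ K) : asym K = dBM K (K - K) := by
  unfold asym dBM
  congr 1
  ext ρ
  constructor
  · rintro ⟨hρ, c, hc⟩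
    exact ⟨hρ, hK.exists_affineEquiv_sub_sandwich hρ hc⟩
  · rintro ⟨hρ, A, x, hKA, hAK⟩
    exact ⟨hρ, exists_neg_subset_vadd_smul_of_subset_image (neg_sub K K).symm A.toAffineMap hKA hAK⟩

theorem asym_le_dBM {B : Set (V n)} (hK : IsConvexBody K) (hB : IsSymUnitBall B) :
    asym K ≤ dBM K B := by
  -- `sInf ∅ = 0`, so the Banach–Mazur set has to be shown nonempty.
  obtain ⟨ρ₀, hρ₀, sandwich⟩ :=
    exists_affineEquiv_sandwich hK.2.1.isBounded hK.2.2 hB.1.2.1.isBounded hB.1.2.2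
  refine le_csInf ⟨ρ₀, hρ₀, sandwich⟩ ?_
  rintro ρ ⟨hρ, A, x, hKA, hAK⟩
  exact csInf_le ⟨0, fun _ hσ => hσ.1.le⟩
    ⟨hρ, exists_neg_subset_vadd_smul_of_subset_image hB.2 A.toAffineMap hKA hAK⟩

end ConvexBody

/-- The Minkowski asymmetry equals the Banach–Mazur distance to the difference
body, and this is the minimum BM-distance to any centrally symmetric body. -/
theorem stmt0 {n : ℕ} (K : Set (V n)) (hK : IsConvexBody K) :
    asym K = dBM K (K - K) ∧
    (∀ B : Set (V n), IsSymUnitBall B → asym K ≤ dBM K B) :=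
  ⟨asym_eq_dBM_sub_self hK.1, fun _ hB => asym_le_dBM hK hB⟩
end

section
/- In any Minkowski space (R^n with norm induced by a symmetric convex body B as unit ball), every convex body K satisfies R(K) + r(K) ≤ D(K), where R is the circumradius, r the inradius, and D the diameter with respect to the norm. -/
open Set Pointwise

/-! If `c +ᵥ r • B ⊆ K` and `x ∈ K`, the point of that ball opposite to `x` as seen from `c` lies
in `K` at gauge distance `‖x - c‖ + r` from `x`. Hence `‖x - c‖ ≤ D(K) - r` for all `x ∈ K`, i.e.
`K ⊆ c +ᵥ (D(K) - r) • B`, so `R(K) ≤ D(K) - r` for every inscribed ball `c +ᵥ r • B`. -/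

open Topology

section TopologicalVectorSpace

variable {E : Type*} [AddCommGroup E] [Module ℝ E] [TopologicalSpace E] {B : Set E}

theorem Convex.mem_nhds_zero_of_neg_eq [IsTopologicalAddGroup E] [ContinuousSMul ℝ E]
    (hconv : Convex ℝ B) (hsym : B = -B) (hint : (interior B).Nonempty) : B ∈ 𝓝 0 := by
  obtain ⟨b, hb⟩ := hint
  have hnegb : -b ∈ interior B := by
    rw [mem_interior_iff_mem_nhds, hsym]
    exact continuous_neg.continuousAt.preimage_mem_nhds
      (by simpa using mem_interior_iff_mem_nhds.1 hb)
  have hmid := hconv.interior hb hnegb (by norm_num : (0 : ℝ) ≤ 1 / 2)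
    (by norm_num : (0 : ℝ) ≤ 1 / 2) (by norm_num)
  rw [smul_neg, add_neg_cancel] at hmid
  exact mem_interior_iff_mem_nhds.1 hmid

theorem mem_smul_iff_gauge_le [IsTopologicalAddGroup E] [ContinuousSMul ℝ E] (hconv : Convex ℝ B)
    (hcl : IsClosed B) (h0 : B ∈ 𝓝 0) {t : ℝ} (ht : 0 < t) {z : E} :
    z ∈ t • B ↔ gauge B z ≤ t := by
  rw [mem_smul_set_iff_inv_smul_mem₀ ht.ne', ← hcl.closure_eq,
    ← gauge_le_one_iff_mem_closure hconv h0, hcl.closure_eq,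
    gauge_smul_of_nonneg (inv_nonneg.2 ht.le), smul_eq_mul, inv_mul_le_one₀ ht]

theorem exists_gauge_eq_one_smul_eq [ContinuousSMul ℝ E] [T1Space E] [Nontrivial E]
    (h0 : B ∈ 𝓝 0) (hb : Bornology.IsVonNBounded ℝ B) (v : E) :
    ∃ u, gauge B u = 1 ∧ gauge B v • u = v := by
  have hpos : ∀ w : E, w ≠ 0 → 0 < gauge B w := fun w ↦ (gauge_pos (absorbent_nhds_zero h0) hb).2
  have normalize : ∀ w : E, w ≠ 0 → gauge B ((gauge B w)⁻¹ • w) = 1 := fun w hw ↦ by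
    rw [gauge_smul_of_nonneg (inv_nonneg.2 (hpos w hw).le), smul_eq_mul,
      inv_mul_cancel₀ (hpos w hw).ne']
  rcases eq_or_ne v 0 with rfl | hv
  · obtain ⟨w, hw⟩ := exists_ne (0 : E)
    exact ⟨_, normalize w hw, by rw [gauge_zero, zero_smul]⟩
  · exact ⟨_, normalize v hv, smul_inv_smul₀ (hpos v hv).ne' v⟩

theorem exists_mem_gauge_sub_eq_add [IsTopologicalAddGroup E] [ContinuousSMul ℝ E] [T1Space E]
    [Nontrivial E] (hconv : Convex ℝ B) (hcl : IsClosed B) (h0 : B ∈ 𝓝 0)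
    (hb : Bornology.IsVonNBounded ℝ B) (hsym : B = -B) {K : Set E} {c : E} {r : ℝ} (hr : 0 ≤ r)
    (hcK : c +ᵥ r • B ⊆ K) (x : E) : ∃ y ∈ K, gauge B (x - y) = gauge B (x - c) + r := by
  obtain ⟨u, hu, hxu⟩ := exists_gauge_eq_one_smul_eq h0 hb (x - c)
  have hnegu : -u ∈ B := by
    rw [← Set.mem_neg, ← hsym, ← one_smul ℝ B, mem_smul_iff_gauge_le hconv hcl h0 one_pos, hu]
  refine ⟨c + r • -u, hcK (vadd_mem_vadd_set (smul_mem_smul_set hnegu)), ?_⟩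
  have hxy : x - (c + r • -u) = (gauge B (x - c) + r) • u := by
    rw [add_smul, hxu, smul_neg]
    abel
  rw [hxy, gauge_smul_of_nonneg (add_nonneg (gauge_nonneg _) hr), hu, smul_eq_mul, mul_one]

theorem exists_vadd_smul_subset_of_mem_interior [ContinuousAdd E]
    (hb : Bornology.IsVonNBounded ℝ B) {K : Set E} {x : E} (hx : x ∈ interior K) :
    ∃ r : ℝ, 0 < r ∧ x +ᵥ r • B ⊆ K := by
  have hU : (x + ·) ⁻¹' K ∈ 𝓝 (0 : E) :=
    (continuous_const_add x).continuousAt.preimage_mem_nhds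
      (by simpa using mem_interior_iff_mem_nhds.1 hx)
  obtain ⟨R, hR, hsub⟩ := (hb hU).exists_pos
  refine ⟨R⁻¹, inv_pos.2 hR, ?_⟩
  rintro _ ⟨_, ⟨b, hb, rfl⟩, rfl⟩
  obtain ⟨u, hu, rfl⟩ := hsub R (le_abs_self R) hb
  simpa [inv_smul_smul₀ hR.ne'] using hu

end TopologicalVectorSpace

section Minkowski

variable {n : ℕ} {B K : Set (V n)}

theorem IsSymUnitBall.mem_nhds_zero (hB : IsSymUnitBall B) : B ∈ 𝓝 0 :=
  hB.1.1.mem_nhds_zero_of_neg_eq hB.2 hB.1.2.2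

theorem gauge_sub_le_mdiam (hconv : Convex ℝ B) (h0 : B ∈ 𝓝 0) (hK : IsCompact K) {x y : V n}
    (hx : x ∈ K) (hy : y ∈ K) : gauge B (x - y) ≤ mdiam B K := by
  have hbdd : BddAbove ((fun p : V n × V n ↦ gauge B (p.1 - p.2)) '' K ×ˢ K) :=
    ((hK.prod hK).image ((continuous_gauge hconv h0).comp continuous_sub)).bddAbove
  refine le_csSup (hbdd.mono ?_) ⟨x, hx, y, hy, rfl⟩
  rintro _ ⟨x, hx, y, hy, rfl⟩
  exact ⟨(x, y), ⟨hx, hy⟩, rfl⟩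

theorem circum_le {ρ : ℝ} (hρ : 0 < ρ) {c : V n} (hK : K ⊆ c +ᵥ ρ • B) : circum B K ≤ ρ :=
  csInf_le ⟨0, fun _ h ↦ h.1.le⟩ ⟨hρ, c, hK⟩

theorem inrad_le {s : ℝ} (hs : 0 ≤ s) (h : ∀ r : ℝ, 0 < r → ∀ c : V n, c +ᵥ r • B ⊆ K → r ≤ s) :
    inrad B K ≤ s :=
  Real.sSup_le (fun _ ⟨hr, c, hc⟩ ↦ h _ hr c hc) hs

theorem circum_add_le_mdiam [Nontrivial (V n)] (hB : IsSymUnitBall B) (hK : IsCompact K)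
    {r : ℝ} (hr : 0 < r) {c : V n} (hcK : c +ᵥ r • B ⊆ K) : circum B K + r ≤ mdiam B K := by
  have h0 := hB.mem_nhds_zero
  obtain ⟨⟨hBconv, hBcomp, -⟩, hsym⟩ := hB
  have far : ∀ x ∈ K, gauge B (x - c) + r ≤ mdiam B K := fun x hx ↦ by
    obtain ⟨y, hy, hxy⟩ := exists_mem_gauge_sub_eq_add hBconv hBcomp.isClosed h0
      (hBcomp.isVonNBounded ℝ) hsym hr.le hcK x
    exact hxy ▸ gauge_sub_le_mdiam hBconv h0 hK hx hy
  have hc_mem : c ∈ K := hcK ⟨0, ⟨0, mem_of_mem_nhds h0, smul_zero r⟩, add_zero c⟩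
  have hrD : r ≤ mdiam B K := by simpa using far c hc_mem
  suffices circum B K ≤ mdiam B K - r by linarith
  refine le_of_forall_pos_le_add fun ε hε ↦ circum_le (c := c) (by linarith) fun x hx ↦ ?_
  rw [mem_vadd_set_iff_neg_vadd_mem, vadd_eq_add, neg_add_eq_sub,
    mem_smul_iff_gauge_le hBconv hBcomp.isClosed h0 (by linarith)]
  linarith [far x hx]

theorem circum_eq_zero_of_subsingleton [Subsingleton (V n)] (hB : B.Nonempty) :
    circum B K = 0 := by
  have hS : {ρ : ℝ | 0 < ρ ∧ ∃ c : V n, K ⊆ c +ᵥ ρ • B} = Set.Ioi 0 := by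
    ext ρ
    refine ⟨And.left, fun hρ ↦ ⟨hρ, 0, ?_⟩⟩
    rw [Subsingleton.eq_univ_of_nonempty ((hB.smul_set).vadd_set)]
    exact Set.subset_univ K
  rw [circum, hS, csInf_Ioi]

-- Every `ρ > 0` is admissible, and `sSup` of the unbounded set `Ioi 0` is the junk value `0`.
theorem inrad_eq_zero_of_subsingleton [Subsingleton (V n)] (hK : K.Nonempty) :
    inrad B K = 0 := by
  have hS : {ρ : ℝ | 0 < ρ ∧ ∃ c : V n, c +ᵥ ρ • B ⊆ K} = Set.Ioi 0 := by
    ext ρ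
    refine ⟨And.left, fun hρ ↦ ⟨hρ, 0, ?_⟩⟩
    rw [Subsingleton.eq_univ_of_nonempty hK]
    exact Set.subset_univ _
  rw [inrad, hS, Real.sSup_of_not_bddAbove (not_bddAbove_Ioi 0)]

end Minkowski

/-- In any Minkowski space, `R(K) + r(K) ≤ D(K)`. -/
theorem stmt2 {n : ℕ} (B K : Set (V n)) (hB : IsSymUnitBall B)
    (hK : IsConvexBody K) :
    circum B K + inrad B K ≤ mdiam B K := by
  have h0 := hB.mem_nhds_zero
  obtain ⟨hBconv, hBcomp, -⟩ := hB.1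
  obtain ⟨-, hKcomp, x₀, hx₀⟩ := hK
  have hx₀K : x₀ ∈ K := interior_subset hx₀
  rcases subsingleton_or_nontrivial (V n) with _ | _
  · rw [circum_eq_zero_of_subsingleton ⟨0, mem_of_mem_nhds h0⟩,
      inrad_eq_zero_of_subsingleton ⟨x₀, hx₀K⟩, add_zero]
    simpa using gauge_sub_le_mdiam hBconv h0 hKcomp hx₀K hx₀K
  · have hRr : ∀ r : ℝ, 0 < r → ∀ c, c +ᵥ r • B ⊆ K → r ≤ mdiam B K - circum B K :=
      fun r hr c hcK ↦ le_sub_iff_add_le'.2 (circum_add_le_mdiam hB hKcomp hr hcK)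
    obtain ⟨r₀, hr₀, hr₀K⟩ :=
      exists_vadd_smul_subset_of_mem_interior (hBcomp.isVonNBounded ℝ) hx₀
    linarith [inrad_le (hr₀.le.trans (hRr r₀ hr₀ x₀ hr₀K)) hRr]
end

section
/- For any convex body K in a Minkowski space and any pseudo completion K^+ = conv(K ∪ (c + (D(K)−R(K))B)) taken with respect to a circumcenter c of K, it holds that D(K^+) = D(K), R(K^+) = R(K), and for any completion K* of K contained in the circumball c + R(K)B one has r(K^+) = r(K*) and s(K^+) = s(K*). -/
open Set Pointwise

/-! Everything is measured from the circumcentre `c`. Writing `D = D(K)`, `R = R(K)`, the ball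
`c + (D - R) B` stays within distance `D` of the circumball `c + R B`, so adding it to `K` changes
neither the diameter nor the circumradius; and by completeness every completion `K*` inside the
circumball contains it, whence `K⁺ ⊆ K*`. For any `L` between `K⁺` and the circumball with
diameter `D`, a ball `z + ρ B ⊆ L` keeps all of `K` within `D - ρ` of `z`, so `r(L) = D - R`, and
`-L ⊆ z + ρ L` keeps `K` within `ρ D / (1 + ρ)` of `-z / (1 + ρ)`, while reflecting through `c`
realises `ρ = R / (D - R)`; so `s(L) = R / (D - R)`. -/

open Topology

namespace IsSymUnitBall

variable {n : ℕ} {B : Set (V n)}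

theorem zero_mem_interior (hB : IsSymUnitBall B) : (0 : V n) ∈ interior B := by
  obtain ⟨⟨hconv, -, x, hx⟩, hsymm⟩ := hB
  have hnx : -x ∈ interior B := by
    have := (Homeomorph.neg (V n)).image_interior B
    rw [Homeomorph.coe_neg, Set.image_neg_eq_neg, Set.image_neg_eq_neg, ← hsymm] at this
    exact this ▸ Set.neg_mem_neg.2 hx
  simpa using hconv.interior (x := x) (y := -x) hx hnx
    (by norm_num : (0 : ℝ) ≤ 1 / 2) (by norm_num : (0 : ℝ) ≤ 1 / 2) (by norm_num)

theorem mem_nhds_zero_s13 (hB : IsSymUnitBall B) : B ∈ 𝓝 (0 : V n) :=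
  mem_interior_iff_mem_nhds.1 hB.zero_mem_interior

theorem absorbent (hB : IsSymUnitBall B) : Absorbent ℝ B :=
  absorbent_nhds_zero hB.mem_nhds_zero_s13

theorem isVonNBounded (hB : IsSymUnitBall B) : Bornology.IsVonNBounded ℝ B :=
  (NormedSpace.isVonNBounded_iff ℝ).2 hB.1.2.1.isBounded

theorem gauge_neg (hB : IsSymUnitBall B) (x : V n) : gauge B (-x) = gauge B x :=
  _root_.gauge_neg (fun y hy => by rw [hB.2]; exact Set.neg_mem_neg.2 hy) x

theorem gauge_sub_comm (hB : IsSymUnitBall B) (x y : V n) :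
    gauge B (x - y) = gauge B (y - x) := by
  rw [← hB.gauge_neg, neg_sub]

theorem gauge_sub_le (hB : IsSymUnitBall B) (x y z : V n) :
    gauge B (x - y) ≤ gauge B (x - z) + gauge B (z - y) := by
  simpa using gauge_add_le hB.1.1 hB.absorbent (x - z) (z - y)

theorem gauge_le_one_iff (hB : IsSymUnitBall B) {x : V n} : gauge B x ≤ 1 ↔ x ∈ B := by
  rw [gauge_le_one_iff_mem_closure hB.1.1 hB.mem_nhds_zero_s13, hB.1.2.1.isClosed.closure_eq]

theorem mem_smul_iff (hB : IsSymUnitBall B) {t : ℝ} (ht : 0 < t) {x : V n} :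
    x ∈ t • B ↔ gauge B x ≤ t := by
  rw [mem_smul_set_iff_inv_smul_mem₀ ht.ne', ← hB.gauge_le_one_iff,
    gauge_smul_of_nonneg (inv_nonneg.2 ht.le), smul_eq_mul, inv_mul_le_iff₀ ht, mul_one]

theorem mem_vadd_smul_iff (hB : IsSymUnitBall B) {t : ℝ} (ht : 0 < t) {c x : V n} :
    x ∈ c +ᵥ t • B ↔ gauge B (x - c) ≤ t := by
  rw [Set.mem_vadd_set_iff_neg_vadd_mem, vadd_eq_add, neg_add_eq_sub, hB.mem_smul_iff ht]

theorem smul_subset_smul (hB : IsSymUnitBall B) {s t : ℝ} (hs : 0 ≤ s) (hst : s ≤ t) :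
    s • B ⊆ t • B := by
  refine ((balanced_iff_neg_mem hB.1.1).2 fun x hx => ?_).smul_mono ?_
  · rw [hB.2]
    exact Set.neg_mem_neg.2 hx
  · rw [Real.norm_of_nonneg hs, Real.norm_of_nonneg (hs.trans hst)]
    exact hst

theorem exists_gauge_eq_one_smul [Nontrivial (V n)] (hB : IsSymUnitBall B) (x : V n) :
    ∃ u, gauge B u = 1 ∧ x = gauge B x • u := by
  have unit : ∀ v : V n, v ≠ 0 → gauge B ((gauge B v)⁻¹ • v) = 1 := fun v hv => by
    rw [gauge_smul_of_nonneg (inv_nonneg.2 (gauge_nonneg v)), smul_eq_mul,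
      inv_mul_cancel₀ (gauge_pos hB.absorbent hB.isVonNBounded |>.2 hv).ne']
  by_cases hx : x = 0
  · obtain ⟨v, hv⟩ := exists_ne (0 : V n)
    exact ⟨_, unit v hv, by simp [hx]⟩
  · refine ⟨_, unit x hx, ?_⟩
    rw [smul_inv_smul₀ (gauge_pos hB.absorbent hB.isVonNBounded |>.2 hx).ne']

end IsSymUnitBall

section Minkowski

variable {n : ℕ} {B K L : Set (V n)}

theorem gauge_sub_le_of_mem_vadd_smul {c x : V n} {t : ℝ} (ht : 0 ≤ t) (hx : x ∈ c +ᵥ t • B) :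
    gauge B (x - c) ≤ t := by
  rw [Set.mem_vadd_set_iff_neg_vadd_mem, vadd_eq_add, neg_add_eq_sub] at hx
  exact gauge_le_of_mem ht hx

theorem gauge_sub_le_add_of_mem_vadd_smul (hB : IsSymUnitBall B) {c x y : V n} {s t : ℝ}
    (hs : 0 ≤ s) (ht : 0 ≤ t) (hx : x ∈ c +ᵥ s • B) (hy : y ∈ c +ᵥ t • B) :
    gauge B (x - y) ≤ s + t := by
  have hyc := gauge_sub_le_of_mem_vadd_smul ht hy
  rw [hB.gauge_sub_comm] at hyc
  linarith [hB.gauge_sub_le x y c, gauge_sub_le_of_mem_vadd_smul hs hx]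

theorem convex_setOf_gauge_sub_le (hB : IsSymUnitBall B) (c : V n) (d : ℝ) :
    Convex ℝ {x | gauge B (x - c) ≤ d} := by
  simpa [sub_eq_neg_add] using
    (hB.1.1.setOfPred_gauge_le (interior_subset hB.zero_mem_interior) hB.absorbent
      d).translate_preimage_right (-c)

theorem gauge_sub_le_of_mem_convexHull (hB : IsSymUnitBall B) {S : Set (V n)} {d : ℝ}
    (hS : ∀ x ∈ S, ∀ y ∈ S, gauge B (x - y) ≤ d) :
    ∀ x ∈ convexHull ℝ S, ∀ y ∈ convexHull ℝ S, gauge B (x - y) ≤ d := by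
  have hS' : ∀ y ∈ S, convexHull ℝ S ⊆ {x | gauge B (x - y) ≤ d} := fun y hy =>
    convexHull_min (fun x hx => hS x hx y hy) (convex_setOf_gauge_sub_le hB y d)
  intro x hx y hy
  rw [hB.gauge_sub_comm]
  refine convexHull_min (fun y' hy' => ?_) (convex_setOf_gauge_sub_le hB x d) hy
  rw [Set.mem_ofPred_eq, hB.gauge_sub_comm]
  exact hS' y' hy' hx

theorem gauge_sub_le_mdiam_s13 (hB : IsSymUnitBall B) {c x y : V n} {t : ℝ} (ht : 0 ≤ t)
    (hL : L ⊆ c +ᵥ t • B) (hx : x ∈ L) (hy : y ∈ L) : gauge B (x - y) ≤ mdiam B L := by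
  refine le_csSup ⟨t + t, ?_⟩ ⟨x, hx, y, hy, rfl⟩
  rintro d ⟨x', hx', y', hy', rfl⟩
  exact gauge_sub_le_add_of_mem_vadd_smul hB ht ht (hL hx') (hL hy')

theorem mdiam_le_of_forall_gauge_le (hL : L.Nonempty) {d : ℝ}
    (h : ∀ x ∈ L, ∀ y ∈ L, gauge B (x - y) ≤ d) : mdiam B L ≤ d := by
  obtain ⟨x, hx⟩ := hL
  refine csSup_le ⟨_, x, hx, x, hx, rfl⟩ ?_
  rintro d' ⟨x, hx, y, hy, rfl⟩
  exact h x hx y hy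

theorem mdiam_mono (hB : IsSymUnitBall B) (hKL : K ⊆ L) (hK : K.Nonempty) {c : V n} {t : ℝ}
    (ht : 0 ≤ t) (hL : L ⊆ c +ᵥ t • B) : mdiam B K ≤ mdiam B L :=
  mdiam_le_of_forall_gauge_le hK fun _ hx _ hy => gauge_sub_le_mdiam_s13 hB ht hL (hKL hx) (hKL hy)

theorem circum_nonneg : 0 ≤ circum B K :=
  Real.sInf_nonneg fun _ hρ => hρ.1.le

theorem circum_le_of_forall_gauge_le (hB : IsSymUnitBall B) {c : V n} {t : ℝ} (ht : 0 ≤ t)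
    (h : ∀ x ∈ K, gauge B (x - c) ≤ t) : circum B K ≤ t := by
  refine le_of_forall_pos_le_add fun ε hε =>
    csInf_le ⟨0, fun _ hρ => hρ.1.le⟩ ⟨by positivity, c, fun x hx => ?_⟩
  exact (hB.mem_vadd_smul_iff (by positivity)).2 ((h x hx).trans (by linarith))

theorem circum_mono (hKL : K ⊆ L) {c : V n} {t : ℝ} (ht : 0 < t) (hL : L ⊆ c +ᵥ t • B) :
    circum B K ≤ circum B L :=
  csInf_le_csInf ⟨0, fun _ hρ => hρ.1.le⟩ ⟨t, ht, c, hL⟩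
    fun _ ⟨hρ, c', hc'⟩ => ⟨hρ, c', hKL.trans hc'⟩

theorem gauge_sub_add_le_of_vadd_smul_subset [Nontrivial (V n)] (hB : IsSymUnitBall B)
    {z p : V n} {ρ D : ℝ} (hρ : 0 ≤ ρ) (hzL : z +ᵥ ρ • B ⊆ L)
    (hL : ∀ x ∈ L, ∀ y ∈ L, gauge B (x - y) ≤ D) (hp : p ∈ L) :
    gauge B (p - z) + ρ ≤ D := by
  obtain ⟨u, hu, hpz⟩ := hB.exists_gauge_eq_one_smul (p - z)
  have hnu : -u ∈ B := by
    rw [hB.2]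
    exact Set.neg_mem_neg.2 (hB.gauge_le_one_iff.1 hu.le)
  -- the point of the inner ball opposite to `p` as seen from its centre
  have hq : z +ᵥ ρ • -u ∈ L := hzL (Set.vadd_mem_vadd_set (Set.smul_mem_smul_set hnu))
  have hpq : p - (z +ᵥ ρ • -u) = (gauge B (p - z) + ρ) • u := by
    rw [vadd_eq_add, add_smul, ← hpz]
    module
  have := hL p hp _ hq
  rwa [hpq, gauge_smul_of_nonneg (add_nonneg (gauge_nonneg _) hρ), hu, smul_eq_mul, mul_one] at this

theorem circum_add_le_of_vadd_smul_subset [Nontrivial (V n)] (hB : IsSymUnitBall B)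
    {z : V n} {ρ D : ℝ} (hρ : 0 ≤ ρ) (hKL : K ⊆ L) (hzL : z +ᵥ ρ • B ⊆ L)
    (hL : ∀ x ∈ L, ∀ y ∈ L, gauge B (x - y) ≤ D) : circum B K + ρ ≤ D := by
  have hz : z ∈ L := by
    simpa using hzL (Set.vadd_mem_vadd_set (Set.zero_mem_smul_set (a := ρ)
      (interior_subset hB.zero_mem_interior)))
  have hρD := gauge_sub_add_le_of_vadd_smul_subset hB hρ hzL hL hz
  rw [sub_self, gauge_zero, zero_add] at hρD
  have := circum_le_of_forall_gauge_le hB (sub_nonneg.2 hρD) fun x hx =>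
    le_sub_iff_add_le.2 (gauge_sub_add_le_of_vadd_smul_subset hB hρ hzL hL (hKL hx))
  linarith

theorem IsConvexBody.exists_vadd_smul_subset (hB : IsSymUnitBall B) (hK : IsConvexBody K) :
    ∃ z : V n, ∃ ε : ℝ, 0 < ε ∧ z +ᵥ ε • B ⊆ K := by
  obtain ⟨z, hz⟩ := hK.2.2
  have hW : (z +ᵥ ·) ⁻¹' K ∈ 𝓝 (0 : V n) :=
    (continuous_const_vadd z).continuousAt.preimage_mem_nhds
      (by simpa using mem_interior_iff_mem_nhds.1 hz)
  obtain ⟨r, hr, hBW⟩ := (hB.isVonNBounded hW).exists_pos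
  refine ⟨z, r⁻¹, inv_pos.2 hr, ?_⟩
  have := (subset_smul_set_iff₀ hr.ne').1 (hBW r (Real.norm_of_nonneg hr.le).ge)
  rintro _ ⟨x, hx, rfl⟩
  exact this hx

theorem IsCompleteBody.vadd_smul_subset (hB : IsSymUnitBall B) (hL : IsCompleteBody B L)
    {c : V n} {s t : ℝ} (hs : 0 ≤ s) (ht : 0 ≤ t) (hLc : L ⊆ c +ᵥ t • B)
    (hst : s + t ≤ mdiam B L) : c +ᵥ s • B ⊆ L := by
  intro x hx
  by_contra hxL
  refine (hL.2 x hxL).not_ge (mdiam_le_of_forall_gauge_le ⟨x, Or.inr rfl⟩ ?_)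
  have hax : ∀ a ∈ L, gauge B (a - x) ≤ mdiam B L := fun a ha =>
    (gauge_sub_le_add_of_mem_vadd_smul hB ht hs (hLc ha) hx).trans (by linarith)
  rintro a (ha | rfl) b (hb | rfl)
  · exact gauge_sub_le_mdiam_s13 hB ht hLc ha hb
  · exact hax a ha
  · rw [hB.gauge_sub_comm]
    exact hax b hb
  · rw [sub_self, gauge_zero]
    linarith

theorem mdiam_le_two_mul_circum (hB : IsSymUnitBall B) (hK : K.Nonempty) {c : V n}
    (hc : K ⊆ c +ᵥ circum B K • B) : mdiam B K ≤ 2 * circum B K :=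
  mdiam_le_of_forall_gauge_le hK fun _ hx _ hy =>
    (gauge_sub_le_add_of_mem_vadd_smul hB circum_nonneg circum_nonneg (hc hx) (hc hy)).trans
      (two_mul _).ge

theorem circum_lt_mdiam [Nontrivial (V n)] (hB : IsSymUnitBall B) (hK : IsConvexBody K)
    {c : V n} (hc : K ⊆ c +ᵥ circum B K • B) : circum B K < mdiam B K := by
  obtain ⟨z, ε, hε, hzK⟩ := hK.exists_vadd_smul_subset hB
  have := circum_add_le_of_vadd_smul_subset hB hε.le subset_rfl hzK fun _ hx _ hy =>
    gauge_sub_le_mdiam_s13 hB circum_nonneg hc hx hy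
  linarith

theorem inrad_eq_of_subset [Nontrivial (V n)] (hB : IsSymUnitBall B) {c : V n} {D : ℝ}
    (hKL : K ⊆ L) (hL : ∀ x ∈ L, ∀ y ∈ L, gauge B (x - y) ≤ D)
    (hcL : c +ᵥ (D - circum B K) • B ⊆ L) (hRD : circum B K < D) :
    inrad B L = D - circum B K := by
  refine IsGreatest.csSup_eq ⟨⟨sub_pos.2 hRD, c, hcL⟩, ?_⟩
  rintro ρ ⟨hρ, z, hzL⟩
  linarith [circum_add_le_of_vadd_smul_subset hB hρ.le hKL hzL hL]

theorem neg_subset_vadd_smul_of_vadd_smul_subset (hB : IsSymUnitBall B) {c : V n} {s t : ℝ}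
    (hs : 0 < s) (ht : 0 < t) (hcL : c +ᵥ s • B ⊆ L) (hLc : L ⊆ c +ᵥ t • B) :
    -L ⊆ -((1 + t / s) • c) +ᵥ (t / s) • L := by
  intro y hy
  -- reflect `-y` through `c` and shrink by `s / t` into the inner ball
  have hw : c + (s / t) • (c + y) ∈ L := by
    refine hcL ((hB.mem_vadd_smul_iff hs).2 ?_)
    have hy' := (hB.mem_vadd_smul_iff ht).1 (hLc hy)
    rw [add_sub_cancel_left, gauge_smul_of_nonneg (by positivity), smul_eq_mul,
      show c + y = -(-y - c) by abel, hB.gauge_neg]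
    exact (mul_le_mul_of_nonneg_left hy' (by positivity)).trans (div_mul_cancel₀ s ht.ne').le
  refine ⟨(t / s) • (c + (s / t) • (c + y)), Set.smul_mem_smul_set hw, ?_⟩
  show -((1 + t / s) • c) + _ = y
  rw [smul_add, smul_smul, div_mul_div_comm, mul_comm t s, div_self (by positivity), one_smul]
  module

theorem circum_mul_one_add_le (hB : IsSymUnitBall B) {z : V n} {ρ D : ℝ} (hρ : 0 < ρ)
    (hD : 0 ≤ D) (hKL : K ⊆ L) (hL : ∀ x ∈ L, ∀ y ∈ L, gauge B (x - y) ≤ D)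
    (hz : -L ⊆ z +ᵥ ρ • L) : circum B K * (1 + ρ) ≤ ρ * D := by
  rw [← le_div_iff₀ (by positivity)]
  refine circum_le_of_forall_gauge_le hB (c := -((1 + ρ)⁻¹ • z)) (by positivity) fun x hx => ?_
  obtain ⟨_, ⟨l, hl, rfl⟩, hxl⟩ := hz (Set.neg_mem_neg.2 (hKL hx))
  have hxl' : x - l = ((1 + ρ) / ρ) • (x - -((1 + ρ)⁻¹ • z)) := by
    change z + ρ • l = -x at hxl
    rw [← eq_sub_iff_add_eq', ← eq_inv_smul_iff₀ hρ.ne'] at hxl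
    rw [hxl]
    match_scalars <;> field_simp
    ring
  have := hL x (hKL hx) l hl
  rw [hxl', gauge_smul_of_nonneg (by positivity), smul_eq_mul] at this
  rw [le_div_iff₀ (by positivity)]
  rw [div_mul_eq_mul_div, div_le_iff₀ hρ] at this
  linarith

theorem asym_eq_of_subset (hB : IsSymUnitBall B) {c : V n} {D : ℝ} (hKL : K ⊆ L)
    (hL : ∀ x ∈ L, ∀ y ∈ L, gauge B (x - y) ≤ D) (hcL : c +ᵥ (D - circum B K) • B ⊆ L)
    (hLc : L ⊆ c +ᵥ circum B K • B) (hR : 0 < circum B K) (hRD : circum B K < D) :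
    asym L = circum B K / (D - circum B K) := by
  refine IsLeast.csInf_eq ⟨⟨by positivity, _,
    neg_subset_vadd_smul_of_vadd_smul_subset hB (sub_pos.2 hRD) hR hcL hLc⟩, ?_⟩
  rintro ρ ⟨hρ, z, hz⟩
  have := circum_mul_one_add_le hB hρ (hR.trans hRD).le hKL hL hz
  rw [div_le_iff₀ (sub_pos.2 hRD)]
  linarith

end Minkowski

section PseudoCompletion

variable {n : ℕ} {B K : Set (V n)} {c : V n}

theorem subset_pseudoCompletion : K ⊆ pseudoCompletion B K c :=
  Set.subset_union_left.trans (subset_convexHull ℝ _)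

theorem vadd_smul_subset_pseudoCompletion :
    c +ᵥ (mdiam B K - circum B K) • B ⊆ pseudoCompletion B K c :=
  Set.subset_union_right.trans (subset_convexHull ℝ _)

theorem pseudoCompletion_subset_vadd_smul (hB : IsSymUnitBall B) (hc : K ⊆ c +ᵥ circum B K • B)
    (hRD : circum B K ≤ mdiam B K) (hDR : mdiam B K ≤ 2 * circum B K) :
    pseudoCompletion B K c ⊆ c +ᵥ circum B K • B :=
  convexHull_min (Set.union_subset hc (Set.vadd_set_mono (hB.smul_subset_smul (by linarith)
    (by linarith)))) ((hB.1.1.smul _).vadd c)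

theorem gauge_sub_le_of_mem_pseudoCompletion (hB : IsSymUnitBall B)
    (hc : K ⊆ c +ᵥ circum B K • B) (hRD : circum B K ≤ mdiam B K)
    (hDR : mdiam B K ≤ 2 * circum B K) :
    ∀ x ∈ pseudoCompletion B K c, ∀ y ∈ pseudoCompletion B K c, gauge B (x - y) ≤ mdiam B K := by
  refine gauge_sub_le_of_mem_convexHull hB ?_
  have hR : 0 ≤ circum B K := circum_nonneg
  have hDR' : 0 ≤ mdiam B K - circum B K := by linarith
  rintro x (hx | hx) y (hy | hy)
  · exact gauge_sub_le_mdiam_s13 hB hR hc hx hy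
  · simpa using gauge_sub_le_add_of_mem_vadd_smul hB hR hDR' (hc hx) hy
  · simpa using gauge_sub_le_add_of_mem_vadd_smul hB hDR' hR hx (hc hy)
  · linarith [gauge_sub_le_add_of_mem_vadd_smul hB hDR' hDR' hx hy]

theorem mdiam_pseudoCompletion (hB : IsSymUnitBall B) (hK : K.Nonempty)
    (hc : K ⊆ c +ᵥ circum B K • B) (hRD : circum B K ≤ mdiam B K)
    (hDR : mdiam B K ≤ 2 * circum B K) : mdiam B (pseudoCompletion B K c) = mdiam B K :=
  le_antisymm (mdiam_le_of_forall_gauge_le (hK.mono subset_pseudoCompletion)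
      (gauge_sub_le_of_mem_pseudoCompletion hB hc hRD hDR))
    (mdiam_mono hB subset_pseudoCompletion hK circum_nonneg
      (pseudoCompletion_subset_vadd_smul hB hc hRD hDR))

theorem circum_pseudoCompletion (hB : IsSymUnitBall B) (hc : K ⊆ c +ᵥ circum B K • B)
    (hR : 0 < circum B K) (hRD : circum B K ≤ mdiam B K) (hDR : mdiam B K ≤ 2 * circum B K) :
    circum B (pseudoCompletion B K c) = circum B K := by
  have hPc := pseudoCompletion_subset_vadd_smul hB hc hRD hDR
  exact le_antisymm (circum_le_of_forall_gauge_le hB hR.le fun x hx =>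
    gauge_sub_le_of_mem_vadd_smul hR.le (hPc hx)) (circum_mono subset_pseudoCompletion hR hPc)

theorem pseudoCompletion_subset_of_isCompletionOf (hB : IsSymUnitBall B)
    (hRD : circum B K ≤ mdiam B K) {Kstar : Set (V n)} (hKstar : IsCompletionOf B Kstar K)
    (hKstar_c : Kstar ⊆ c +ᵥ circum B K • B) :
    pseudoCompletion B K c ⊆ Kstar := by
  obtain ⟨hcomplete, hKKstar, hdiam⟩ := hKstar
  refine convexHull_min (Set.union_subset hKKstar ?_) hcomplete.1.1
  exact hcomplete.vadd_smul_subset hB (sub_nonneg.2 hRD) circum_nonneg hKstar_c (by linarith)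

end PseudoCompletion

/-- Basic properties of the pseudo completion. -/
theorem stmt13 {n : ℕ} (B K : Set (V n)) (hB : IsSymUnitBall B)
    (hK : IsConvexBody K) (c : V n) (hc : K ⊆ c +ᵥ circum B K • B) :
    mdiam B (pseudoCompletion B K c) = mdiam B K ∧
    circum B (pseudoCompletion B K c) = circum B K ∧
    ∀ Kstar : Set (V n), IsCompletionOf B Kstar K →
      Kstar ⊆ c +ᵥ circum B K • B →
      inrad B (pseudoCompletion B K c) = inrad B Kstar ∧
      asym (pseudoCompletion B K c) = asym Kstar := by
  have hKne : K.Nonempty := hK.2.2.mono interior_subset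
  obtain hV | hV := subsingleton_or_nontrivial (V n)
  · rw [(hKne.mono subset_pseudoCompletion).eq_univ, hKne.eq_univ]
    refine ⟨rfl, rfl, fun Kstar hKstar _ => ?_⟩
    rw [(hKstar.1.1.2.2.mono interior_subset).eq_univ]
    exact ⟨rfl, rfl⟩
  have hRD : circum B K < mdiam B K := circum_lt_mdiam hB hK hc
  have hDR : mdiam B K ≤ 2 * circum B K := mdiam_le_two_mul_circum hB hKne hc
  have hR : 0 < circum B K := by linarith
  have hPc := pseudoCompletion_subset_vadd_smul hB hc hRD.le hDR
  have hPD := gauge_sub_le_of_mem_pseudoCompletion hB hc hRD.le hDR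
  refine ⟨mdiam_pseudoCompletion hB hKne hc hRD.le hDR,
    circum_pseudoCompletion hB hc hR hRD.le hDR, fun Kstar hKstar hKstar_c => ?_⟩
  have hKstarD : ∀ x ∈ Kstar, ∀ y ∈ Kstar, gauge B (x - y) ≤ mdiam B K := fun _ hx _ hy =>
    (gauge_sub_le_mdiam_s13 hB circum_nonneg hKstar_c hx hy).trans hKstar.2.2.le
  have hGKstar := vadd_smul_subset_pseudoCompletion.trans
    (pseudoCompletion_subset_of_isCompletionOf hB hRD.le hKstar hKstar_c)
  rw [inrad_eq_of_subset hB subset_pseudoCompletion hPD vadd_smul_subset_pseudoCompletion hRD,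
    inrad_eq_of_subset hB hKstar.2.1 hKstarD hGKstar hRD,
    asym_eq_of_subset hB subset_pseudoCompletion hPD vadd_smul_subset_pseudoCompletion hPc hR hRD,
    asym_eq_of_subset hB hKstar.2.1 hKstarD hGKstar hKstar_c hR hRD]
  exact ⟨rfl, rfl⟩
end

section
/- In the Minkowski space M^3 whose unit ball is the regular octahedron (cross-polytope) B = conv{±e_1, ±e_2, ±e_3}, the regular simplex T = conv{(1,1,1)/3, (−1,−1,1)/3, (1,−1,−1)/3, (−1,1,−1)/3} satisfies R(T) = 1, D(T) = 4/3, hence j(T) = 3/4, and T attains the Jung constant: j(M^3) = 3/4. -/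
open Set Pointwise

/-!
The octahedron is `{x | |φᵢ x| ≤ 1 for i = 0,…,3}`, where `φᵢ x = 3 ⟪vᵢ, x⟫` for the vertices
`vᵢ` of `T`; the four functionals satisfy the single relation `∑ φᵢ = 0`, and
`T = {x | φᵢ x ≥ -1/3 for all i}`. Hence every `φᵢ` ranges over `[-1/3, 1]` on `T`, which gives
`D(T) ≤ 4/3`, while `∑ φᵢ (vᵢ - c) = 4` for every centre `c` forces `R(T) ≥ 1`.

For the upper bound `R(K) ≤ 3/4 D(K)` let `[mᵢ, Mᵢ]` be the range of `φᵢ` on `K`. Then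
`Mᵢ - mᵢ ≤ D`, and evaluating the relation at a maximiser of `φ₀` gives `∑ Mᵢ ≤ 3D`
(similarly `∑ mᵢ ≥ -3D`). So one can pick `sᵢ ∈ [Mᵢ - 3D/4, mᵢ + 3D/4]` with `∑ sᵢ = 0`, and the
point `c` with `φᵢ c = sᵢ` is a centre of a ball of radius `3D/4` containing `K`.
-/

theorem mdiam_nonneg {n : ℕ} (B K : Set (V n)) : 0 ≤ mdiam B K :=
  Real.sSup_nonneg <| by rintro _ ⟨x, -, y, -, rfl⟩; exact gauge_nonneg _

theorem circum_le_of_forall_subset_vadd_smul {n : ℕ} {B K : Set (V n)} {r : ℝ} (hr : 0 ≤ r)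
    (c : V n) (h : ∀ ρ, r < ρ → K ⊆ c +ᵥ ρ • B) : circum B K ≤ r :=
  le_of_forall_gt_imp_ge_of_dense fun ρ hρ =>
    csInf_le ⟨0, fun _ hρ' => hρ'.1.le⟩ ⟨hr.trans_lt hρ, c, h ρ hρ⟩

theorem exists_mem_Icc_sum_eq_zero {ι : Type*} [Fintype ι] {a b : ι → ℝ} (hab : a ≤ b)
    (ha : ∑ i, a i ≤ 0) (hb : 0 ≤ ∑ i, b i) :
    ∃ s : ι → ℝ, (∀ i, s i ∈ Icc (a i) (b i)) ∧ ∑ i, s i = 0 := by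
  obtain ⟨t, ⟨ht0, ht1⟩, hsum⟩ := intermediate_value_Icc zero_le_one
    (f := fun t : ℝ => ∑ i, (a i + t * (b i - a i))) (by fun_prop)
    (show (0 : ℝ) ∈ Icc _ _ by simpa using And.intro ha hb)
  refine ⟨fun i => a i + t * (b i - a i), fun i => ⟨?_, ?_⟩, hsum⟩
  · nlinarith [hab i]
  · nlinarith [hab i]

def l1Norm (x : V 3) : ℝ := |x 0| + |x 1| + |x 2|

def octahedron : Set (V 3) := {x | l1Norm x ≤ 1}

theorem l1Norm_smul (a : ℝ) (x : V 3) : l1Norm (a • x) = |a| * l1Norm x := by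
  simp only [l1Norm, PiLp.smul_apply, smul_eq_mul, abs_mul]
  ring

theorem l1Norm_nonneg (x : V 3) : 0 ≤ l1Norm x := by
  unfold l1Norm; positivity

def signVector : Fin 4 → Fin 3 → ℝ := ![![1, 1, 1], ![-1, -1, 1], ![1, -1, -1], ![-1, 1, -1]]

noncomputable def facetFunctional (i : Fin 4) : V 3 →L[ℝ] ℝ :=
  innerSL ℝ (WithLp.toLp 2 (signVector i))

theorem facetFunctional_apply (i : Fin 4) (x : V 3) :
    facetFunctional i x = ∑ j, signVector i j * x j := by
  simp [facetFunctional, PiLp.inner_apply, mul_comm]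

theorem sum_signVector (j : Fin 3) : ∑ i, signVector i j = 0 := by
  fin_cases j <;> simp [Fin.sum_univ_four, signVector]

theorem abs_signVector (i : Fin 4) (j : Fin 3) : |signVector i j| = 1 := by
  fin_cases i <;> fin_cases j <;> simp [signVector]

theorem sum_facetFunctional (x : V 3) : ∑ i, facetFunctional i x = 0 := by
  simp_rw [facetFunctional_apply]
  rw [Finset.sum_comm]
  simp [← Finset.sum_mul, sum_signVector]

theorem abs_facetFunctional_le (i : Fin 4) (x : V 3) : |facetFunctional i x| ≤ l1Norm x := by
  rw [facetFunctional_apply]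
  refine (Finset.abs_sum_le_sum_abs _ _).trans_eq ?_
  simp [abs_mul, abs_signVector, Fin.sum_univ_three, l1Norm]

theorem l1Norm_le_iff {x : V 3} {r : ℝ} : l1Norm x ≤ r ↔ ∀ i, |facetFunctional i x| ≤ r := by
  refine ⟨fun h i => (abs_facetFunctional_le i x).trans h, fun h => ?_⟩
  have hφ : ∀ i, facetFunctional i x =
      signVector i 0 * x 0 + signVector i 1 * x 1 + signVector i 2 * x 2 := fun i => by
    rw [facetFunctional_apply, Fin.sum_univ_three]
  have h0 := abs_le.1 (h 0); have h1 := abs_le.1 (h 1)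
  have h2 := abs_le.1 (h 2); have h3 := abs_le.1 (h 3)
  simp only [hφ, signVector, Fin.isValue, Matrix.cons_val', Matrix.cons_val_zero,
    Matrix.cons_val_fin_one, Matrix.cons_val_one, Matrix.cons_val, one_mul, neg_mul] at h0 h1 h2 h3
  unfold l1Norm
  rcases abs_cases (x 0) with ⟨e0, -⟩ | ⟨e0, -⟩ <;>
  rcases abs_cases (x 1) with ⟨e1, -⟩ | ⟨e1, -⟩ <;>
  rcases abs_cases (x 2) with ⟨e2, -⟩ | ⟨e2, -⟩ <;>
  linarith

theorem exists_facetFunctional_eq {s : Fin 4 → ℝ} (hs : ∑ i, s i = 0) :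
    ∃ c : V 3, ∀ i, facetFunctional i c = s i := by
  refine ⟨WithLp.toLp 2 ![(s 0 + s 2) / 2, (s 0 + s 3) / 2, (s 0 + s 1) / 2], fun i => ?_⟩
  rw [Fin.sum_univ_four] at hs
  fin_cases i <;> simp [facetFunctional_apply, Fin.sum_univ_three, signVector] <;> linarith

theorem mem_smul_octahedron {ρ : ℝ} (hρ : 0 < ρ) {x : V 3} : x ∈ ρ • octahedron ↔ l1Norm x ≤ ρ := by
  rw [mem_smul_set_iff_inv_smul_mem₀ hρ.ne', octahedron, mem_ofPred_eq, l1Norm_smul,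
    abs_of_pos (inv_pos.2 hρ), inv_mul_le_iff₀ hρ, mul_one]

theorem mem_vadd_smul_octahedron {ρ : ℝ} (hρ : 0 < ρ) {c x : V 3} :
    x ∈ c +ᵥ ρ • octahedron ↔ l1Norm (x - c) ≤ ρ := by
  rw [mem_vadd_set_iff_neg_vadd_mem, vadd_eq_add, neg_add_eq_sub, mem_smul_octahedron hρ]

theorem gauge_octahedron : gauge octahedron = l1Norm := by
  ext x
  refine le_antisymm (le_of_forall_gt_imp_ge_of_dense fun r hr => ?_) ?_
  · have hr0 : 0 < r := (l1Norm_nonneg x).trans_lt hr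
    exact gauge_le_of_mem hr0.le ((mem_smul_octahedron hr0).2 hr.le)
  · have hpos : 0 < l1Norm x + 1 := (l1Norm_nonneg x).trans_lt (lt_add_one _)
    exact le_csInf ⟨_, hpos, (mem_smul_octahedron hpos).2 (lt_add_one _).le⟩
      fun r ⟨hr, hx⟩ => (mem_smul_octahedron hr).1 hx

theorem continuous_l1Norm : Continuous l1Norm := by
  unfold l1Norm; fun_prop

theorem l1Norm_sub_le_mdiam {K : Set (V 3)} (hK : IsCompact K) {x y : V 3} (hx : x ∈ K)
    (hy : y ∈ K) : l1Norm (x - y) ≤ mdiam octahedron K := by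
  refine le_csSup ?_ ⟨x, hx, y, hy, by rw [gauge_octahedron]⟩
  refine ((hK.prod hK).bddAbove_image (f := fun z : V 3 × V 3 => l1Norm (z.1 - z.2))
    (continuous_l1Norm.comp (continuous_fst.sub continuous_snd)).continuousOn).mono ?_
  rintro _ ⟨x, hx, y, hy, rfl⟩
  exact ⟨(x, y), ⟨hx, hy⟩, by rw [gauge_octahedron]⟩

theorem exists_l1Norm_sub_le_three_quarters_mdiam {K : Set (V 3)} (hK : IsCompact K)
    (hne : K.Nonempty) : ∃ c, ∀ x ∈ K, l1Norm (x - c) ≤ 3 / 4 * mdiam octahedron K := by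
  set D := mdiam octahedron K
  have hD : 0 ≤ D := mdiam_nonneg octahedron K
  choose xmax hxmaxK hxmax using fun i =>
    hK.exists_isMaxOn hne (facetFunctional i).continuous.continuousOn
  choose xmin hxminK hxmin using fun i =>
    hK.exists_isMinOn hne (facetFunctional i).continuous.continuousOn
  have hdiff : ∀ i, ∀ x ∈ K, ∀ y ∈ K, facetFunctional i x - facetFunctional i y ≤ D :=
    fun i x hx y hy => by
      rw [← map_sub]
      exact (le_abs_self _).trans (l1Norm_le_iff.1 (l1Norm_sub_le_mdiam hK hx hy) i)
  have hsum_max : ∑ i, facetFunctional i (xmax i) ≤ 3 * D := by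
    have h := sum_facetFunctional (xmax 0)
    rw [Fin.sum_univ_four] at h ⊢
    linarith [hdiff 1 _ (hxmaxK 1) _ (hxmaxK 0), hdiff 2 _ (hxmaxK 2) _ (hxmaxK 0),
      hdiff 3 _ (hxmaxK 3) _ (hxmaxK 0)]
  have hsum_min : -(3 * D) ≤ ∑ i, facetFunctional i (xmin i) := by
    have h := sum_facetFunctional (xmin 0)
    rw [Fin.sum_univ_four] at h ⊢
    linarith [hdiff 1 _ (hxminK 0) _ (hxminK 1), hdiff 2 _ (hxminK 0) _ (hxminK 2),
      hdiff 3 _ (hxminK 0) _ (hxminK 3)]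
  obtain ⟨s, hs, hs0⟩ := exists_mem_Icc_sum_eq_zero
    (a := fun i => facetFunctional i (xmax i) - 3 / 4 * D)
    (b := fun i => facetFunctional i (xmin i) + 3 / 4 * D)
    (fun i => by have := hdiff i _ (hxmaxK i) _ (hxminK i); dsimp only; linarith)
    (by
      simp only [Finset.sum_sub_distrib, Finset.sum_const, Finset.card_univ, Fintype.card_fin,
        nsmul_eq_mul]
      linarith)
    (by
      simp only [Finset.sum_add_distrib, Finset.sum_const, Finset.card_univ, Fintype.card_fin,
        nsmul_eq_mul]
      linarith)
  obtain ⟨c, hc⟩ := exists_facetFunctional_eq hs0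
  refine ⟨c, fun x hx => l1Norm_le_iff.2 fun i => ?_⟩
  rw [map_sub, hc, abs_le]
  constructor <;> linarith [isMaxOn_iff.1 (hxmax i) x hx, isMinOn_iff.1 (hxmin i) x hx, (hs i).1,
    (hs i).2]

theorem circum_octahedron_le {K : Set (V 3)} (hK : IsCompact K) (hne : K.Nonempty) :
    circum octahedron K ≤ 3 / 4 * mdiam octahedron K := by
  have hD : 0 ≤ 3 / 4 * mdiam octahedron K := by
    have := mdiam_nonneg octahedron K; positivity
  obtain ⟨c, hc⟩ := exists_l1Norm_sub_le_three_quarters_mdiam hK hne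
  exact circum_le_of_forall_subset_vadd_smul hD c fun ρ hρ x hx =>
    (mem_vadd_smul_octahedron (hD.trans_lt hρ)).2 ((hc x hx).trans hρ.le)

noncomputable def tetraVertex : Fin 4 → V 3 :=
  ![(WithLp.equiv 2 (Fin 3 → ℝ)).symm ![1/3, 1/3, 1/3],
    (WithLp.equiv 2 (Fin 3 → ℝ)).symm ![-1/3, -1/3, 1/3],
    (WithLp.equiv 2 (Fin 3 → ℝ)).symm ![1/3, -1/3, -1/3],
    (WithLp.equiv 2 (Fin 3 → ℝ)).symm ![-1/3, 1/3, -1/3]]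

def tetrahedron : Set (V 3) := convexHull ℝ (range tetraVertex)

theorem tetraVertex_apply (i : Fin 4) (j : Fin 3) : tetraVertex i j = signVector i j / 3 := by
  fin_cases i <;> fin_cases j <;> simp [tetraVertex, signVector]

theorem facetFunctional_tetraVertex (i j : Fin 4) :
    facetFunctional i (tetraVertex j) = if i = j then 1 else -(1 / 3) := by
  fin_cases i <;> fin_cases j <;>
    simp [facetFunctional_apply, tetraVertex_apply, Fin.sum_univ_three, signVector] <;> norm_num

theorem sum_smul_tetraVertex (x : V 3) :
    ∑ i, ((1 + 3 * facetFunctional i x) / 4) • tetraVertex i = x := by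
  ext j
  fin_cases j <;>
    simp [Fin.sum_univ_four, facetFunctional_apply, tetraVertex_apply, Fin.sum_univ_three,
      signVector] <;> ring

theorem tetrahedron_eq : tetrahedron = {x | ∀ i, -(1 / 3) ≤ facetFunctional i x} := by
  refine Subset.antisymm (convexHull_min ?_ ?_) fun x hx => ?_
  · rintro _ ⟨j, rfl⟩ i
    rw [facetFunctional_tetraVertex]
    split_ifs <;> norm_num
  · simp only [ofPred_forall]
    exact convex_iInter fun i => convex_halfSpace_ge (facetFunctional i).isLinear _
  · rw [← sum_smul_tetraVertex x]
    refine (convex_convexHull ℝ _).sum_mem (fun i _ => ?_) ?_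
      fun i _ => subset_convexHull ℝ _ (mem_range_self i)
    · linarith [mem_ofPred.1 hx i]
    · rw [← Finset.sum_div, Finset.sum_add_distrib, ← Finset.mul_sum, sum_facetFunctional]
      norm_num

theorem facetFunctional_mem_Icc_of_mem_tetrahedron {x : V 3} (hx : x ∈ tetrahedron) (i : Fin 4) :
    facetFunctional i x ∈ Icc (-(1 / 3)) 1 := by
  rw [tetrahedron_eq] at hx
  have h := sum_facetFunctional x
  rw [Fin.sum_univ_four] at h
  refine ⟨hx i, ?_⟩
  fin_cases i <;> simp only [Fin.zero_eta, Fin.mk_one, Fin.reduceFinMk] <;>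
    linarith [hx 0, hx 1, hx 2, hx 3]

theorem l1Norm_le_one_of_mem_tetrahedron {x : V 3} (hx : x ∈ tetrahedron) : l1Norm x ≤ 1 :=
  l1Norm_le_iff.2 fun i => by
    have := facetFunctional_mem_Icc_of_mem_tetrahedron hx i
    exact abs_le.2 ⟨by linarith [this.1], this.2⟩

theorem l1Norm_sub_le_of_mem_tetrahedron {x y : V 3} (hx : x ∈ tetrahedron)
    (hy : y ∈ tetrahedron) : l1Norm (x - y) ≤ 4 / 3 :=
  l1Norm_le_iff.2 fun i => by
    have hxi := facetFunctional_mem_Icc_of_mem_tetrahedron hx i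
    have hyi := facetFunctional_mem_Icc_of_mem_tetrahedron hy i
    rw [map_sub, abs_le]
    constructor <;> linarith [hxi.1, hxi.2, hyi.1, hyi.2]

theorem circum_tetrahedron : circum octahedron tetrahedron = 1 := by
  refine IsLeast.csInf_eq ⟨⟨one_pos, 0, fun x hx => ?_⟩, ?_⟩
  · rw [mem_vadd_smul_octahedron one_pos, sub_zero]
    exact l1Norm_le_one_of_mem_tetrahedron hx
  rintro ρ ⟨hρ, c, hc⟩
  have hv : ∀ i, 1 - facetFunctional i c ≤ ρ := fun i => by
    have hi := (mem_vadd_smul_octahedron hρ).1 (hc (subset_convexHull ℝ _ (mem_range_self i)))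
    have hφ := (le_abs_self _).trans (l1Norm_le_iff.1 hi i)
    rwa [map_sub, facetFunctional_tetraVertex, if_pos rfl] at hφ
  have h := sum_facetFunctional c
  rw [Fin.sum_univ_four] at h
  linarith [hv 0, hv 1, hv 2, hv 3]

theorem mdiam_tetrahedron : mdiam octahedron tetrahedron = 4 / 3 := by
  refine IsGreatest.csSup_eq ⟨⟨tetraVertex 0, subset_convexHull ℝ _ (mem_range_self 0),
    tetraVertex 1, subset_convexHull ℝ _ (mem_range_self 1), ?_⟩, ?_⟩
  · rw [gauge_octahedron]
    simp only [l1Norm, PiLp.sub_apply, tetraVertex_apply, signVector, Matrix.cons_val',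
      Matrix.cons_val_zero, Matrix.cons_val_one, Matrix.cons_val, Matrix.cons_val_fin_one]
    norm_num
  · rintro _ ⟨x, hx, y, hy, rfl⟩
    rw [gauge_octahedron]
    exact l1Norm_sub_le_of_mem_tetrahedron hx hy

theorem jungRatio_tetrahedron : jungRatio octahedron tetrahedron = 3 / 4 := by
  rw [jungRatio, circum_tetrahedron, mdiam_tetrahedron]
  norm_num

theorem zero_mem_interior_tetrahedron : (0 : V 3) ∈ interior tetrahedron := by
  rw [tetrahedron_eq, mem_interior_iff_mem_nhds]
  exact Filter.eventually_all.2 fun i =>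
    (((facetFunctional i).continuous.tendsto 0).eventually
      (lt_mem_nhds (by rw [map_zero]; norm_num))).mono fun _ => le_of_lt

theorem isConvexBody_tetrahedron : IsConvexBody tetrahedron :=
  ⟨convex_convexHull ℝ _, (finite_range tetraVertex).isCompact_convexHull ℝ, 0,
    zero_mem_interior_tetrahedron⟩

theorem jungConst_octahedron : jungConst octahedron = 3 / 4 := by
  refine IsGreatest.csSup_eq ⟨⟨tetrahedron, isConvexBody_tetrahedron,
    jungRatio_tetrahedron.symm⟩, ?_⟩
  rintro _ ⟨K, ⟨-, hK, hint⟩, rfl⟩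
  exact div_le_of_le_mul₀ (mdiam_nonneg _ _) (by norm_num)
    (circum_octahedron_le hK (hint.mono interior_subset))

/-- In `ℓ₁³` (unit ball the regular octahedron), the regular simplex `T`
with vertices `(±1,±1,±1)/3` (even sign changes) has `R(T) = 1`,
`D(T) = 4/3`, `j(T) = 3/4`, and attains the Jung constant. -/
theorem stmt17 :
    let B : Set (V 3) := {x : V 3 | |x 0| + |x 1| + |x 2| ≤ 1}
    let p : Fin 4 → V 3 :=
      ![(WithLp.equiv 2 (Fin 3 → ℝ)).symm ![1/3, 1/3, 1/3],
        (WithLp.equiv 2 (Fin 3 → ℝ)).symm ![-1/3, -1/3, 1/3],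
        (WithLp.equiv 2 (Fin 3 → ℝ)).symm ![1/3, -1/3, -1/3],
        (WithLp.equiv 2 (Fin 3 → ℝ)).symm ![-1/3, 1/3, -1/3]]
    let T : Set (V 3) := convexHull ℝ (Set.range p)
    circum B T = 1 ∧ mdiam B T = 4/3 ∧ jungRatio B T = 3/4 ∧
      jungConst B = 3/4 :=
  ⟨circum_tetrahedron, mdiam_tetrahedron, jungRatio_tetrahedron, jungConst_octahedron⟩
end
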